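/- Let X be a local ℓr-multisemigroup in which there exist x, y with (ℓ x) ⊙ (ℓ y) ≠ ∅ and z, w with z ⊙ w ≠ ∅, let Q be a unital quantale, and let dom, cod : Q → Q. Suppose id_E ≠ ⊥ as a function X → Q, and the induced operations Dom and Cod on X → Q (with convolution ∗) satisfy the modal quantale axioms: F ≤ (Dom F) ∗ F, Dom (F ∗ Dom G) = Dom (F ∗ G), Dom F ≤ id_E, Dom ⊥ = ⊥, Dom (F ⊔ G) = Dom F ⊔ Dom G, the opposite axioms for Cod (F ≤ F ∗ Cod F, Cod ((Cod F) ∗ G) = Cod (F ∗ G), Cod F ≤ id_E, Cod ⊥ = ⊥, Cod (F ⊔ G) = Cod F ⊔ Cod G), and Dom ∘ Cod = Cod, Cod ∘ Dom = Dom. Then dom and cod satisfy the modal quantale axioms on Q: α ≤ dom α * α, dom (α * dom β) = dom (α * β), dom α ≤ 1, dom ⊥ = ⊥, dom (α ⊔ β) = dom α ⊔ dom β, the opposite axioms for cod, and dom ∘ cod = cod, cod ∘ dom = dom. -/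
import Mathlib


open Set

/-- Convolution of functions `f, g : X → Q` along a multioperation:
`(f ∗ g)(x) = ⨆ {f y * g z | x ∈ y ⊙ z}`. -/
def conv {X Q : Type*} [CompleteLattice Q] [Mul Q] (m : X → X → Set X)
    (f g : X → Q) : X → Q :=
  fun x => ⨆ y, ⨆ z, ⨆ _ : x ∈ m y z, f y * g z

/-- `id_E x = 1` if `ℓ x = x` and `⊥` otherwise. -/
noncomputable def idE {X Q : Type*} [CompleteLattice Q] [One Q] (l : X → X) : X → Q :=
  fun x => letI := Classical.dec (l x = x); if l x = x then 1 else ⊥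

/-- `(Dom f) v = ⨆ {dom (f x) | ℓ x = v}`. -/
def DomOp {X Q : Type*} [CompleteLattice Q] (l : X → X) (dm : Q → Q)
    (f : X → Q) : X → Q :=
  fun v => ⨆ x, ⨆ _ : l x = v, dm (f x)

/-- `(Cod f) v = ⨆ {cod (f x) | r x = v}`. -/
def CodOp {X Q : Type*} [CompleteLattice Q] (r : X → X) (cd : Q → Q)
    (f : X → Q) : X → Q :=
  fun v => ⨆ x, ⨆ _ : r x = v, cd (f x)


set_option linter.unusedSectionVars false

open Classical in
noncomputable def delta {X Q : Type*} [CompleteLattice Q] (e : X) (α : Q) : X → Q :=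
  fun y => if y = e then α else ⊥

section
variable {X Q : Type*} [CompleteLattice Q] [Monoid Q] [IsQuantale Q]
  (m : X → X → Set X) (e : X)

lemma mul_bot' (q : Q) : q * (⊥ : Q) = ⊥ := by
  have := mul_sSup_distrib (x := q) (s := (∅ : Set Q))
  simpa using this

lemma bot_mul' (q : Q) : (⊥ : Q) * q = ⊥ := by
  have := sSup_mul_distrib (x := q) (s := (∅ : Set Q))
  simpa using this

lemma delta_apply_self (α : Q) : delta e α e = α := by simp [delta]

lemma delta_sup (α β : Q) : delta e α ⊔ delta e β = delta e (α ⊔ β) := by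
  funext y
  by_cases h : y = e <;> simp [delta, h, Pi.sup_apply]

lemma conv_delta (hm : m e e = {e}) (α β : Q) :
    conv m (delta e α) (delta e β) = delta e (α * β) := by
  funext v
  apply le_antisymm
  · refine iSup_le fun y => iSup_le fun z => iSup_le fun hv => ?_
    by_cases hy : y = e
    · by_cases hz : z = e
      · subst hy; subst hz
        rw [hm] at hv
        simp only [mem_singleton_iff] at hv
        subst hv
        simp [delta]
      · simp [delta, hz, mul_bot']
    · simp [delta, hy, bot_mul']
  · by_cases hv : v = e
    · have hmem : v ∈ m e e := by rw [hm]; exact hv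
      have h2 : delta e (α * β) v = delta e α e * delta e β e := by simp [delta, hv]
      rw [h2]
      exact le_iSup_of_le e (le_iSup_of_le e (le_iSup_of_le hmem le_rfl))
    · simp [delta, hv]

lemma dom_delta (l : X → X) (dm : Q → Q) (hle : l e = e) (hbot : dm ⊥ = ⊥) (α : Q) :
    DomOp l dm (delta e α) = delta e (dm α) := by
  funext v
  apply le_antisymm
  · refine iSup_le fun x => iSup_le fun hx => ?_
    by_cases hxe : x = e
    · subst hxe
      rw [delta_apply_self]
      rw [hle] at hx; subst hx
      rw [delta_apply_self]
    · simp [delta, hxe, hbot]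
  · by_cases hv : v = e
    · have h2 : delta e (dm α) v = dm (delta e α e) := by simp [delta, hv]
      rw [h2]
      exact le_iSup_of_le e (le_iSup_of_le (hle.trans hv.symm) le_rfl)
    · simp [delta, hv]
end

/-- Correspondence from a local ℓr-multisemigroup `X` and the convolution algebra
`X → Q` down to `Q`: if `Dom` and `Cod` satisfy the modal quantale axioms on `X → Q`,
then `dom` and `cod` satisfy the modal quantale axioms on `Q`. -/
theorem stmt15 {X Q : Type*} [CompleteLattice Q] [Monoid Q] [IsQuantale Q]
    (m : X → X → Set X) (l r : X → X)
    (hassoc : ∀ x y z : X, (⋃ v ∈ m y z, m x v) = ⋃ u ∈ m x y, m u z)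
    (hD : ∀ x y, m x y ≠ ∅ → r x = l y)
    (hl : ∀ x, m (l x) x = {x})
    (hr : ∀ x, m x (r x) = {x})
    (hloc : ∀ x y, r x = l y → m x y ≠ ∅)
    (hex1 : ∃ x y : X, m (l x) (l y) ≠ ∅)
    (hex2 : ∃ z w : X, m z w ≠ ∅)
    (dm cd : Q → Q)
    (hidE : idE l ≠ (⊥ : X → Q))
    (hD1 : ∀ F : X → Q, F ≤ conv m (DomOp l dm F) F)
    (hD2 : ∀ F G : X → Q,
      DomOp l dm (conv m F (DomOp l dm G)) = DomOp l dm (conv m F G))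
    (hD3 : ∀ F : X → Q, DomOp l dm F ≤ idE l)
    (hD4 : DomOp l dm (⊥ : X → Q) = ⊥)
    (hD5 : ∀ F G : X → Q, DomOp l dm (F ⊔ G) = DomOp l dm F ⊔ DomOp l dm G)
    (hC1 : ∀ F : X → Q, F ≤ conv m F (CodOp r cd F))
    (hC2 : ∀ F G : X → Q,
      CodOp r cd (conv m (CodOp r cd F) G) = CodOp r cd (conv m F G))
    (hC3 : ∀ F : X → Q, CodOp r cd F ≤ idE l)
    (hC4 : CodOp r cd (⊥ : X → Q) = ⊥)
    (hC5 : ∀ F G : X → Q, CodOp r cd (F ⊔ G) = CodOp r cd F ⊔ CodOp r cd G)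
    (hDC : ∀ F : X → Q, DomOp l dm (CodOp r cd F) = CodOp r cd F)
    (hCD : ∀ F : X → Q, CodOp r cd (DomOp l dm F) = DomOp l dm F) :
    (∀ α : Q, α ≤ dm α * α) ∧
    (∀ α β : Q, dm (α * dm β) = dm (α * β)) ∧
    (∀ α : Q, dm α ≤ 1) ∧
    (dm ⊥ = ⊥) ∧
    (∀ α β : Q, dm (α ⊔ β) = dm α ⊔ dm β) ∧
    (∀ α : Q, α ≤ α * cd α) ∧
    (∀ α β : Q, cd (cd α * β) = cd (α * β)) ∧
    (∀ α : Q, cd α ≤ 1) ∧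
    (cd ⊥ = ⊥) ∧
    (∀ α β : Q, cd (α ⊔ β) = cd α ⊔ cd β) ∧
    (∀ α : Q, dm (cd α) = cd α) ∧
    (∀ α : Q, cd (dm α) = dm α) := by
  classical
  obtain ⟨z, w, hzw⟩ := hex2
  set e := l z with he_def
  have hlz : m (l z) z = {z} := hl z
  have he_r : r e = e := hD (l z) z (by rw [hlz]; simp)
  have hmee : m e e = {e} := by have h := hr e; rw [he_r] at h; exact h
  have hle : l e = e := ((hD e e (by rw [hmee]; simp)).symm).trans he_r
  have hdmbot : dm ⊥ = ⊥ := by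
    have h := congrFun hD4 (l z)
    refine le_bot_iff.mp ?_
    calc dm ⊥ = dm ((⊥ : X → Q) z) := rfl
      _ ≤ DomOp l dm (⊥ : X → Q) (l z) := le_iSup_of_le z (le_iSup_of_le rfl le_rfl)
      _ = ⊥ := h
  have hcdbot : cd ⊥ = ⊥ := by
    have h := congrFun hC4 (r z)
    refine le_bot_iff.mp ?_
    calc cd ⊥ = cd ((⊥ : X → Q) z) := rfl
      _ ≤ CodOp r cd (⊥ : X → Q) (r z) := le_iSup_of_le z (le_iSup_of_le rfl le_rfl)
      _ = ⊥ := h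
  have keyD : ∀ α : Q, DomOp l dm (delta e α) = delta e (dm α) :=
    dom_delta e l dm hle hdmbot
  have keyC : ∀ α : Q, CodOp r cd (delta e α) = delta e (cd α) :=
    dom_delta e r cd he_r hcdbot
  have keyM : ∀ α β : Q, conv m (delta e α) (delta e β) = delta e (α * β) :=
    conv_delta m e hmee
  have hidEe : idE l e = (1 : Q) := by simp [idE, hle]
  refine ⟨?_, ?_, ?_, hdmbot, ?_, ?_, ?_, ?_, hcdbot, ?_, ?_, ?_⟩
  · intro α
    have h := hD1 (delta e α)
    rw [keyD, keyM] at h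
    have h2 := h e
    simpa [delta] using h2
  · intro α β
    have h := hD2 (delta e α) (delta e β)
    rw [keyD, keyM, keyM, keyD, keyD] at h
    have h2 := congrFun h e
    simpa [delta] using h2
  · intro α
    have h := hD3 (delta e α)
    rw [keyD] at h
    have h2 := h e
    rw [hidEe] at h2
    simpa [delta] using h2
  · intro α β
    have h := hD5 (delta e α) (delta e β)
    rw [delta_sup, keyD, keyD, keyD, delta_sup] at h
    have h2 := congrFun h e
    simpa [delta] using h2
  · intro α
    have h := hC1 (delta e α)
    rw [keyC, keyM] at h
    have h2 := h e
    simpa [delta] using h2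
  · intro α β
    have h := hC2 (delta e α) (delta e β)
    rw [keyC, keyM, keyM, keyC, keyC] at h
    have h2 := congrFun h e
    simpa [delta] using h2
  · intro α
    have h := hC3 (delta e α)
    rw [keyC] at h
    have h2 := h e
    rw [hidEe] at h2
    simpa [delta] using h2
  · intro α β
    have h := hC5 (delta e α) (delta e β)
    rw [delta_sup, keyC, keyC, keyC, delta_sup] at h
    have h2 := congrFun h e
    simpa [delta] using h2
  · intro α
    have h := hDC (delta e α)
    rw [keyC, keyD] at h
    have h2 := congrFun h e
    simpa [delta] using h2
  · intro α
    have h := hCD (delta e α)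
    rw [keyD, keyC] at h
    have h2 := congrFun h e
    simpa [delta] using h2
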